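/- Let κ₀ > 0, ζ > 0, L > 0, s > 0, J ∈ ℂ, and let w ∈ ℂ² satisfy Re(w·w) ≥ ζ s² and ‖w‖ ≤ L·s. Then z := κ₀·√(w·w) satisfies Re z ≥ κ₀·√ζ·s > 0, and the two-dimensional pulled-back Helmholtz kernel value g := (i/4)·(−2i/π)·(∫₀^∞ exp((i−t)z)/√(t²−2it) dt)·J satisfies |g| ≤ (|J|/4)·√(2/(π·κ₀·√ζ))·exp(κ₀·L·s)·s^{−1/2}. -/

import Mathlib

noncomputable section

open Complex MeasureTheory

/-- The complex-bilinear dot product `w · w = ∑ i, wᵢ²` on `ℂ^d`. -/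
def cdot {d : ℕ} (w : EuclideanSpace ℂ (Fin d)) : ℂ := ∑ i, w i * w i

/-- The principal branch of the complex square root. -/
def csqrt (z : ℂ) : ℂ := z ^ (1 / 2 : ℂ)

/-!
For `t > 0` the integrand is bounded by `e^{‖z‖} e^{-t Re z} / √(2t)`, because
`Re ((i - t) z) = -Im z - t Re z` and `|t² - 2it| ≥ 2t`; the Gamma integral
`∫₀^∞ t^{-1/2} e^{-at} dt = √(π/a)` then bounds `‖∫‖` by `e^{‖z‖} √(π / (2 Re z))`.
For `z = κ₀ √(w·w)`, `Re √u ≥ √(Re u)` gives `Re z ≥ κ₀ √ζ s`, and `|w·w| ≤ ‖w‖²` gives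
`‖z‖ ≤ κ₀ L s`; the prefactor `(i/4)(-2i/π)` equals `1/(2π)`.
-/

open Set Real

lemma norm_cdot_le_norm_sq {d : ℕ} (w : EuclideanSpace ℂ (Fin d)) : ‖cdot w‖ ≤ ‖w‖ ^ 2 := by
  rw [EuclideanSpace.norm_sq_eq]
  calc ‖cdot w‖ ≤ ∑ i, ‖w i * w i‖ := norm_sum_le _ _
    _ = ∑ i, ‖w i‖ ^ 2 := by simp only [norm_mul, sq]

lemma norm_csqrt (z : ℂ) : ‖csqrt z‖ = √‖z‖ := by
  rcases eq_or_ne z 0 with rfl | hz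
  · simp [csqrt]
  · rw [csqrt, Complex.norm_cpow_of_ne_zero hz]
    simp [Real.sqrt_eq_rpow]

lemma norm_csqrt_cdot_le {d : ℕ} (w : EuclideanSpace ℂ (Fin d)) : ‖csqrt (cdot w)‖ ≤ ‖w‖ := by
  rw [norm_csqrt, ← Real.sqrt_sq (norm_nonneg w)]
  exact Real.sqrt_le_sqrt (norm_cdot_le_norm_sq w)

lemma sqrt_re_le_csqrt_re (z : ℂ) : √z.re ≤ (csqrt z).re := by
  rw [csqrt, one_div, Complex.cpow_inv_two_re]
  exact Real.sqrt_le_sqrt (by linarith [Complex.re_le_norm z])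

lemma integral_rpow_neg_half_mul_exp_neg_mul {a : ℝ} (ha : 0 < a) :
    ∫ t in Ioi (0 : ℝ), t ^ (-(1 / 2) : ℝ) * Real.exp (-(a * t)) = √(π / a) := by
  have h := Real.integral_rpow_mul_exp_neg_mul_Ioi one_half_pos ha
  rw [Real.Gamma_one_half_eq] at h
  norm_num at h
  rw [h, ← Real.sqrt_eq_rpow, Real.sqrt_inv, Real.sqrt_div' _ ha.le, div_eq_inv_mul]

lemma integrableOn_rpow_neg_half_mul_exp_neg_mul {a : ℝ} (ha : 0 < a) :
    IntegrableOn (fun t : ℝ ↦ t ^ (-(1 / 2) : ℝ) * Real.exp (-(a * t))) (Ioi 0) := by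
  simpa [Real.rpow_one, neg_mul] using
    integrableOn_rpow_mul_exp_neg_mul_rpow (by norm_num : (-1 : ℝ) < -(1 / 2)) one_pos ha

/-- The integral representation `H₀⁽¹⁾(z) = (-2i/π) · hankelIntegral z`, valid for `0 < Re z`. -/
def hankelIntegral (z : ℂ) : ℂ :=
  ∫ t in Ioi (0 : ℝ), Complex.exp ((Complex.I - t) * z) / csqrt ((t : ℂ) ^ 2 - 2 * Complex.I * t)

lemma sqrt_two_mul_sqrt_le_norm_csqrt (t : ℝ) :
    √2 * √t ≤ ‖csqrt ((t : ℂ) ^ 2 - 2 * Complex.I * t)‖ := by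
  rw [norm_csqrt, ← Real.sqrt_mul zero_le_two]
  refine Real.sqrt_le_sqrt ((le_abs_self _).trans ?_)
  calc |2 * t| = |((t : ℂ) ^ 2 - 2 * Complex.I * t).im| := by simp [sq]
    _ ≤ _ := Complex.abs_im_le_norm _

lemma norm_hankelIntegrand_le (z : ℂ) {t : ℝ} (ht : 0 < t) :
    ‖Complex.exp ((Complex.I - t) * z) / csqrt ((t : ℂ) ^ 2 - 2 * Complex.I * t)‖ ≤
      Real.exp ‖z‖ / √2 * (t ^ (-(1 / 2) : ℝ) * Real.exp (-(z.re * t))) := by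
  have hre : ((Complex.I - t) * z).re ≤ ‖z‖ + -(z.re * t) := by
    have hre_eq : ((Complex.I - t) * z).re = -z.im - z.re * t := by
      simp only [Complex.mul_re, Complex.sub_re, Complex.sub_im, Complex.I_re, Complex.I_im,
        Complex.ofReal_re, Complex.ofReal_im]
      ring
    rw [hre_eq]
    linarith [neg_abs_le z.im, Complex.abs_im_le_norm z]
  have hrhs : Real.exp ‖z‖ / √2 * (t ^ (-(1 / 2) : ℝ) * Real.exp (-(z.re * t))) =
      Real.exp (‖z‖ + -(z.re * t)) / (√2 * √t) := by
    rw [Real.exp_add, Real.rpow_neg ht.le, ← Real.sqrt_eq_rpow]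
    ring
  rw [norm_div, Complex.norm_exp, hrhs]
  exact div_le_div₀ (Real.exp_pos _).le (Real.exp_le_exp.mpr hre) (by positivity)
    (sqrt_two_mul_sqrt_le_norm_csqrt t)

lemma norm_hankelIntegral_le {z : ℂ} (hz : 0 < z.re) :
    ‖hankelIntegral z‖ ≤ Real.exp ‖z‖ * √(π / (2 * z.re)) :=
  calc ‖hankelIntegral z‖
      ≤ ∫ t in Ioi 0, Real.exp ‖z‖ / √2 * (t ^ (-(1 / 2) : ℝ) * Real.exp (-(z.re * t))) :=
        norm_integral_le_of_norm_le ((integrableOn_rpow_neg_half_mul_exp_neg_mul hz).const_mul _)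
          ((ae_restrict_iff' measurableSet_Ioi).mpr
            (.of_forall fun _ ht ↦ norm_hankelIntegrand_le z ht))
    _ = Real.exp ‖z‖ * √(π / (2 * z.re)) := by
        rw [integral_const_mul, integral_rpow_neg_half_mul_exp_neg_mul hz, mul_comm 2, ← div_div,
          Real.sqrt_div' _ zero_le_two]
        ring

lemma inv_two_pi_mul_sqrt_pi_div_eq {c s : ℝ} (hc : 0 < c) (hs : 0 < s) :
    (2 * π)⁻¹ * √(π / (2 * (c * s))) = 1 / 4 * √(2 / (π * c)) * s ^ (-(1 / 2 : ℝ)) := by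
  rw [Real.rpow_neg hs.le, ← Real.sqrt_eq_rpow, Real.sqrt_div' _ (by positivity),
    Real.sqrt_div' _ (by positivity), Real.sqrt_mul zero_le_two, Real.sqrt_mul hc.le,
    Real.sqrt_mul pi_pos.le]
  have : 0 < √π := by positivity
  have : 0 < √c := by positivity
  have : 0 < √s := by positivity
  field_simp
  rw [Real.sq_sqrt pi_pos.le, Real.sq_sqrt zero_le_two]
  ring

theorem helmholtz_kernel_2d_bound_general
    (κ₀ ζ L s : ℝ) (hκ : 0 < κ₀) (hζ : 0 < ζ) (hs : 0 < s)
    (J : ℂ) (w : EuclideanSpace ℂ (Fin 2))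
    (hw1 : ζ * s ^ 2 ≤ (cdot w).re) (hw2 : ‖w‖ ≤ L * s) :
    (0 < ((κ₀ : ℂ) * csqrt (cdot w)).re ∧
      κ₀ * Real.sqrt ζ * s ≤ ((κ₀ : ℂ) * csqrt (cdot w)).re) ∧
    ‖(Complex.I / 4) * (-2 * Complex.I / (Real.pi : ℂ)) *
        (∫ t in Set.Ioi (0 : ℝ),
          Complex.exp ((Complex.I - (t : ℂ)) * ((κ₀ : ℂ) * csqrt (cdot w))) /
            csqrt ((t : ℂ) ^ 2 - 2 * Complex.I * t)) * J‖ ≤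
      (‖J‖ / 4) * Real.sqrt (2 / (Real.pi * κ₀ * Real.sqrt ζ)) * Real.exp (κ₀ * L * s) *
        s ^ (-(1 / 2 : ℝ)) := by
  set z := (κ₀ : ℂ) * csqrt (cdot w)
  have hre : κ₀ * √ζ * s ≤ z.re := by
    have hsqrt : √ζ * s ≤ √(cdot w).re := by
      rw [← Real.sqrt_sq hs.le, ← Real.sqrt_mul hζ.le]
      exact Real.sqrt_le_sqrt hw1
    rw [Complex.re_ofReal_mul, mul_assoc]
    exact mul_le_mul_of_nonneg_left (hsqrt.trans (sqrt_re_le_csqrt_re _)) hκ.le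
  have hre_pos : 0 < z.re := lt_of_lt_of_le (by positivity) hre
  have hnorm : ‖z‖ ≤ κ₀ * L * s := by
    rw [norm_mul, Complex.norm_real, Real.norm_of_nonneg hκ.le, mul_assoc]
    exact mul_le_mul_of_nonneg_left ((norm_csqrt_cdot_le w).trans hw2) hκ.le
  refine ⟨⟨hre_pos, hre⟩, ?_⟩
  have hprefactor : Complex.I / 4 * (-2 * Complex.I / π) = ((2 * π)⁻¹ : ℝ) := by
    push_cast
    linear_combination (-(2 : ℂ) / (4 * π)) * Complex.I_sq
  calc _ = (2 * π)⁻¹ * ‖hankelIntegral z‖ * ‖J‖ := by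
        rw [hprefactor, norm_mul, norm_mul, Complex.norm_real, Real.norm_of_nonneg (by positivity)]
        rfl
    _ ≤ (2 * π)⁻¹ * (Real.exp (κ₀ * L * s) * √(π / (2 * (κ₀ * √ζ * s)))) * ‖J‖ := by
        gcongr
        exact (norm_hankelIntegral_le hre_pos).trans (by gcongr)
    _ = _ := by
        rw [mul_left_comm, inv_two_pi_mul_sqrt_pi_div_eq (by positivity) hs, ← mul_assoc π]
        ring

/-- Bound for the two-dimensional pulled-back Helmholtz kernel
`(i/4)·H₀⁽¹⁾(κ₀·√(w·w))·J`: if `Re (w·w) ≥ ζ s²` and `‖w‖ ≤ L s`, then `z = κ₀√(w·w)` has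
`Re z ≥ κ₀ √ζ s > 0` and the kernel value is bounded by
`(|J|/4)·√(2/(π κ₀ √ζ))·exp(κ₀ L s)·s^{−1/2}`. -/
theorem helmholtz_kernel_2d_bound
    (κ₀ ζ L s : ℝ) (hκ : 0 < κ₀) (hζ : 0 < ζ) (hL : 0 < L) (hs : 0 < s)
    (J : ℂ) (w : EuclideanSpace ℂ (Fin 2))
    (hw1 : ζ * s ^ 2 ≤ (cdot w).re) (hw2 : ‖w‖ ≤ L * s) :
    (0 < ((κ₀ : ℂ) * csqrt (cdot w)).re ∧
      κ₀ * Real.sqrt ζ * s ≤ ((κ₀ : ℂ) * csqrt (cdot w)).re) ∧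
    ‖(Complex.I / 4) * (-2 * Complex.I / (Real.pi : ℂ)) *
        (∫ t in Set.Ioi (0 : ℝ),
          Complex.exp ((Complex.I - (t : ℂ)) * ((κ₀ : ℂ) * csqrt (cdot w))) /
            csqrt ((t : ℂ) ^ 2 - 2 * Complex.I * t)) * J‖ ≤
      (‖J‖ / 4) * Real.sqrt (2 / (Real.pi * κ₀ * Real.sqrt ζ)) * Real.exp (κ₀ * L * s) *
        s ^ (-(1 / 2 : ℝ)) :=
  helmholtz_kernel_2d_bound_general κ₀ ζ L s hκ hζ hs J w hw1 hw2
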